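/- arXiv:1810.04371 — 5 statements merged into one kernel-verified Lean document; each statement's English description precedes it below -/
import Mathlib

section
/- Let μ > 0 and X ≥ 0 with E[X] = 1/λ, 0 < λ < μ. Let ᾱ > 0 solve α = μ − μE[e^{−αX}] and α̂ > 0 solve α = μ − μe^{−α/λ}. Then α̂ ≥ ᾱ, and consequently 1/α̂ + 1/λ ≤ 1/ᾱ + 1/λ. -/
open MeasureTheory ProbabilityTheory Real

/-- For the FCFS G/M/1 queue, the fixed point `α̂` of the deterministic map
`α = μ − μ e^{−α/λ}` dominates the fixed point `ᾱ` of
`α = μ − μ E[e^{−αX}]`; hence the peak age `1/α + 1/λ` is minimized by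
periodic (deterministic) packet generation. -/
theorem GM1_deterministic_fixed_point_dominates
    {Ω : Type*} [MeasureSpace Ω] [IsProbabilityMeasure (ℙ : Measure Ω)]
    (X : Ω → ℝ) (lam mu abar ahat : ℝ)
    (hlam : 0 < lam) (hlammu : lam < mu)
    (hXnn : ∀ᵐ ω ∂ℙ, 0 ≤ X ω) (hXmeas : AEMeasurable X ℙ)
    (hXint : Integrable X ℙ) (hEX : 𝔼[X] = 1 / lam)
    (habar : 0 < abar) (habar_fix : abar = mu - mu * 𝔼[fun ω => exp (-abar * X ω)])
    (hahat : 0 < ahat) (hahat_fix : ahat = mu - mu * exp (-ahat / lam)) :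
    abar ≤ ahat ∧ 1 / ahat + 1 / lam ≤ 1 / abar + 1 / lam := by
  have hmu : 0 < mu := hlam.trans hlammu
  -- integrability of exp(-abar * X)
  have hmeas : AEStronglyMeasurable (fun ω => exp (-abar * X ω)) ℙ :=
    (Real.measurable_exp.comp_aemeasurable (hXmeas.const_mul (-abar))).aestronglyMeasurable
  have hbound : ∀ᵐ ω ∂ℙ, ‖exp (-abar * X ω)‖ ≤ 1 := by
    filter_upwards [hXnn] with ω hω
    rw [Real.norm_eq_abs, abs_of_pos (exp_pos _)]
    exact exp_le_one_iff.mpr (by nlinarith)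
  have hEint : Integrable (fun ω => exp (-abar * X ω)) ℙ :=
    Integrable.mono' (integrable_const 1) hmeas hbound
  -- Jensen's inequality
  have hfint : Integrable (fun ω => -abar * X ω) ℙ := hXint.const_mul (-abar)
  have hjensen :
      exp (∫ ω, -abar * X ω ∂ℙ) ≤ ∫ ω, exp (-abar * X ω) ∂ℙ :=
    convexOn_exp.map_integral_le continuous_exp.continuousOn isClosed_univ
      (Filter.Eventually.of_forall fun _ => Set.mem_univ _) hfint
      (by exact hEint)
  have hint_eq : ∫ ω, -abar * X ω ∂ℙ = -abar / lam := by
    rw [integral_const_mul]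
    rw [show 𝔼[X] = 1 / lam from hEX] at *
    field_simp
  rw [hint_eq] at hjensen
  -- hence abar ≤ mu - mu * exp(-abar/lam)
  have habar_fix' : abar = mu - mu * ∫ ω, exp (-abar * X ω) ∂ℙ := habar_fix
  have hkey : abar ≤ mu - mu * exp (-abar / lam) := by
    have h := mul_le_mul_of_nonneg_left hjensen hmu.le
    linarith
  -- main: abar ≤ ahat, by contradiction using strict convexity
  have hmain : abar ≤ ahat := by
    by_contra h
    push_neg at h
    set t : ℝ := ahat / abar with ht_def
    have ht0 : 0 < t := div_pos hahat habar
    have ht1 : t < 1 := (div_lt_one habar).mpr h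
    have htab : t * abar = ahat := div_mul_cancel₀ ahat habar.ne'
    have hne : (-abar / lam : ℝ) ≠ (0 : ℝ) := by
      have : (0:ℝ) < abar / lam := div_pos habar hlam
      simp only [neg_div]
      linarith
    have hconv := strictConvexOn_exp.2 (Set.mem_univ (-abar / lam))
      (Set.mem_univ (0 : ℝ)) hne ht0 (by linarith : (0:ℝ) < 1 - t) (by ring)
    rw [smul_eq_mul, smul_eq_mul, smul_eq_mul, smul_eq_mul, mul_zero, add_zero,
      Real.exp_zero, mul_one] at hconv
    have harg : t * (-abar / lam) = -ahat / lam := by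
      rw [← htab]; field_simp
    rw [harg] at hconv
    -- ahat = mu - mu * exp(-ahat/lam) > t * (mu - mu * exp(-abar/lam)) ≥ t * abar = ahat
    have h1 : mu * exp (-ahat / lam) < mu * (t * exp (-abar / lam) + (1 - t)) :=
      mul_lt_mul_of_pos_left hconv hmu
    have h2 : t * abar ≤ t * (mu - mu * exp (-abar / lam)) :=
      mul_le_mul_of_nonneg_left hkey ht0.le
    nlinarith [hahat_fix]
  refine ⟨hmain, ?_⟩
  have : 1 / ahat ≤ 1 / abar := one_div_le_one_div_of_le habar hmain
  linarith
end

section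
/- Let X be a fixed nonnegative random variable with E[X] > 0, and let (S_η) be a family of nonnegative random variables independent of X with parameter η, such that for every x > 0, P(S_η > x) → 0 and E[S_η·1{S_η ≤ x}] → 0 as η → η*. Then P(S_η < X) → 1, E[S_η·1{S_η < X}] → 0, and E[min(X, S_η)] → 0 as η → η*. Consequently the peak age E[X]/P(S_η<X) + E[S_η 1{S_η<X}]/P(S_η<X) converges to E[X], and the average age ½E[X²]/E[X] + E[min(X,S_η)]/P(S_η<X) converges to ½E[X²]/E[X]. -/
open MeasureTheory ProbabilityTheory Set Filter Topology

/-!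
Since `X > 0` almost surely, `P(X ≤ x) → 0` as `x ↓ 0`, and `P(X ≤ S_η) ≤ P(S_η > x) + P(X ≤ x)`
gives `P(S_η < X) → 1`. Both `S_η 1{S_η < X}` and `min(X, S_η)` lie between `0` and
`S_η 1{S_η ≤ 1} + X 1{S_η > 1}`; the first summand has vanishing mean by hypothesis, the second
by absolute continuity of the integral of `X`, because `P(S_η > 1) → 0`.
-/

lemma mul_indicator_one_apply {α M₀ : Type*} [MulZeroOneClass M₀] (s : Set α) (f : α → M₀)
    (a : α) : f a * s.indicator (fun _ => 1) a = s.indicator f a := by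
  by_cases h : a ∈ s <;> simp [h]

section Pointwise

variable {Ω : Type*} {X S : Ω → ℝ}

lemma indicator_setOf_lt_le_min {ω : Ω} (hX : 0 ≤ X ω) (hS : 0 ≤ S ω) :
    {ω | S ω < X ω}.indicator S ω ≤ min (X ω) (S ω) := by
  by_cases h : S ω < X ω
  · simp [h, h.le]
  · simp [h, hX, hS]

lemma min_le_indicator_le_add_indicator_lt (c : ℝ) (ω : Ω) :
    min (X ω) (S ω) ≤ {ω | S ω ≤ c}.indicator S ω + {ω | c < S ω}.indicator X ω := by
  by_cases h : S ω ≤ c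
  · simp [h, not_lt.2 h]
  · simp [h, not_le.1 h]

end Pointwise

section Limits

variable {Ω ι : Type*} [MeasurableSpace Ω] {μ : Measure Ω} {l : Filter ι}

lemma tendsto_measure_setOf_le_nhdsGT [IsFiniteMeasure μ] {X : Ω → ℝ} (hX : Measurable X)
    (a : ℝ) : Tendsto (fun x => μ {ω | X ω ≤ x}) (𝓝[>] a) (𝓝 (μ {ω | X ω ≤ a})) := by
  have h := tendsto_measure_biInter_gt (μ := μ) (s := fun x => {ω | X ω ≤ x}) (a := a)
    (fun _ _ => (measurableSet_le hX measurable_const).nullMeasurableSet)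
    (fun _ _ _ hij _ hω => le_trans hω hij) ⟨a + 1, by linarith, measure_ne_top _ _⟩
  have hInter : ⋂ r > a, {ω | X ω ≤ r} = {ω | X ω ≤ a} := by
    ext ω
    simpa using ⟨le_of_forall_gt_imp_ge_of_dense, fun h _ hr => h.trans hr.le⟩
  rwa [hInter] at h

lemma tendsto_measure_setOf_le_of_tendsto_measure_gt [IsFiniteMeasure μ] {X : Ω → ℝ}
    {S : ι → Ω → ℝ} (hX : Measurable X) (hXpos : ∀ᵐ ω ∂μ, 0 < X ω)
    (htail : ∀ x > 0, Tendsto (fun η => μ {ω | x < S η ω}) l (𝓝 0)) :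
    Tendsto (fun η => μ {ω | X ω ≤ S η ω}) l (𝓝 0) := by
  rw [ENNReal.tendsto_nhds_zero]
  intro ε hε
  have hε2 : 0 < ε / 2 := ENNReal.half_pos hε.ne'
  have hX0 : μ {ω | X ω ≤ 0} = 0 := by simpa [ae_iff] using hXpos
  obtain ⟨x, hXx, hx⟩ : ∃ x, μ {ω | X ω ≤ x} ≤ ε / 2 ∧ 0 < x := by
    have h := tendsto_measure_setOf_le_nhdsGT (μ := μ) hX 0
    rw [hX0] at h
    exact ((h.eventually (eventually_le_nhds hε2)).and self_mem_nhdsWithin).exists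
  filter_upwards [(htail x hx).eventually (eventually_le_nhds hε2)] with η hη
  calc μ {ω | X ω ≤ S η ω} ≤ μ ({ω | x < S η ω} ∪ {ω | X ω ≤ x}) :=
        measure_mono fun ω hω => (lt_or_ge x (S η ω)).imp id hω.trans
    _ ≤ μ {ω | x < S η ω} + μ {ω | X ω ≤ x} := measure_union_le _ _
    _ ≤ ε / 2 + ε / 2 := add_le_add hη hXx
    _ = ε := ENNReal.add_halves ε

lemma tendsto_measureReal_setOf_lt_of_tendsto_measure_gt [IsProbabilityMeasure μ]
    {X : Ω → ℝ} {S : ι → Ω → ℝ} (hX : Measurable X) (hS : ∀ η, Measurable (S η))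
    (hXpos : ∀ᵐ ω ∂μ, 0 < X ω)
    (htail : ∀ x > 0, Tendsto (fun η => μ {ω | x < S η ω}) l (𝓝 0)) :
    Tendsto (fun η => μ.real {ω | S η ω < X ω}) l (𝓝 1) := by
  have hcompl : ∀ η, {ω | S η ω < X ω} = {ω | X ω ≤ S η ω}ᶜ := fun η => by ext; simp
  simp_rw [hcompl, probReal_compl_eq_one_sub (measurableSet_le hX (hS _))]
  have h := (ENNReal.tendsto_toReal ENNReal.zero_ne_top).comp
    (tendsto_measure_setOf_le_of_tendsto_measure_gt hX hXpos htail)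
  simpa [measureReal_def] using (tendsto_const_nhds (x := (1 : ℝ))).sub h

lemma tendsto_integral_of_le_min [IsFiniteMeasure μ] {X : Ω → ℝ} {S f : ι → Ω → ℝ} (c : ℝ)
    (hXint : Integrable X μ) (hS : ∀ η, Measurable (S η)) (hSnn : ∀ η, ∀ᵐ ω ∂μ, 0 ≤ S η ω)
    (hf0 : ∀ η, ∀ᵐ ω ∂μ, 0 ≤ f η ω) (hf : ∀ η, ∀ᵐ ω ∂μ, f η ω ≤ min (X ω) (S η ω))
    (htail : Tendsto (fun η => μ {ω | c < S η ω}) l (𝓝 0))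
    (htrunc : Tendsto (fun η => ∫ ω, {ω | S η ω ≤ c}.indicator (S η) ω ∂μ) l (𝓝 0)) :
    Tendsto (fun η => ∫ ω, f η ω ∂μ) l (𝓝 0) := by
  have hle : ∀ η, MeasurableSet {ω | S η ω ≤ c} :=
    fun η => measurableSet_le (hS η) measurable_const
  have hgt : ∀ η, MeasurableSet {ω | c < S η ω} :=
    fun η => measurableSet_lt measurable_const (hS η)
  have htrunc_int : ∀ η, Integrable ({ω | S η ω ≤ c}.indicator (S η)) μ := by
    refine fun η => Integrable.of_bound ((hS η).indicator (hle η)).aestronglyMeasurable |c| ?_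
    filter_upwards [hSnn η] with ω hω
    by_cases h : S η ω ≤ c
    · simpa [h, abs_of_nonneg hω] using h.trans (le_abs_self c)
    · simp [h]
  have hdom_int : ∀ η, Integrable (fun ω =>
      {ω | S η ω ≤ c}.indicator (S η) ω + {ω | c < S η ω}.indicator X ω) μ :=
    fun η => (htrunc_int η).add (hXint.indicator (hgt η))
  have hdom : Tendsto (fun η => ∫ ω,
      ({ω | S η ω ≤ c}.indicator (S η) ω + {ω | c < S η ω}.indicator X ω) ∂μ) l (𝓝 0) := by
    simp_rw [integral_add (htrunc_int _) (hXint.indicator (hgt _)), integral_indicator (hgt _)]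
    simpa using htrunc.add (hXint.tendsto_setIntegral_nhds_zero htail)
  refine squeeze_zero (fun η => integral_nonneg_of_ae (hf0 η))
    (fun η => integral_mono_of_nonneg (hf0 η) (hdom_int η) ?_) hdom
  filter_upwards [hf η] with ω hω
  exact hω.trans (min_le_indicator_le_add_indicator_lt c ω)

end Limits

theorem LCFS_heavy_tail_achieves_bounds_general
    {Ω : Type*} [MeasureSpace Ω] [IsProbabilityMeasure (ℙ : Measure Ω)]
    {ι : Type*} (l : Filter ι)
    (X : Ω → ℝ) (S : ι → Ω → ℝ)
    (hXnn : ∀ᵐ ω ∂ℙ, 0 ≤ X ω) (hX0 : ℙ {ω | X ω = 0} = 0)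
    (hXmeas : Measurable X)
    (hXint : Integrable X ℙ)
    (hSnn : ∀ η, ∀ᵐ ω ∂ℙ, 0 ≤ S η ω) (hSmeas : ∀ η, Measurable (S η))
    (htail : ∀ x : ℝ, 0 < x →
      Tendsto (fun η => (ℙ {ω | x < S η ω}).toReal) l (𝓝 0))
    (htrunc : ∀ x : ℝ, 0 < x →
      Tendsto (fun η =>
        𝔼[fun ω => S η ω * Set.indicator {ω' | S η ω' ≤ x} (fun _ => (1:ℝ)) ω]) l (𝓝 0)) :
    Tendsto (fun η => (ℙ {ω | S η ω < X ω}).toReal) l (𝓝 1) ∧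
    Tendsto (fun η =>
      𝔼[fun ω => S η ω * Set.indicator {ω' | S η ω' < X ω'} (fun _ => (1:ℝ)) ω]) l (𝓝 0) ∧
    Tendsto (fun η => 𝔼[fun ω => min (X ω) (S η ω)]) l (𝓝 0) ∧
    Tendsto (fun η =>
      𝔼[X] / (ℙ {ω | S η ω < X ω}).toReal +
        𝔼[fun ω => S η ω * Set.indicator {ω' | S η ω' < X ω'} (fun _ => (1:ℝ)) ω] /
          (ℙ {ω | S η ω < X ω}).toReal) l (𝓝 (𝔼[X])) ∧
    Tendsto (fun η =>
      (1 / 2) * 𝔼[fun ω => (X ω) ^ 2] / 𝔼[X] +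
        𝔼[fun ω => min (X ω) (S η ω)] / (ℙ {ω | S η ω < X ω}).toReal) l
      (𝓝 ((1 / 2) * 𝔼[fun ω => (X ω) ^ 2] / 𝔼[X])) := by
  have htail' : ∀ x > 0, Tendsto (fun η => ℙ {ω | x < S η ω}) l (𝓝 0) := fun x hx =>
    (ENNReal.tendsto_toReal_iff (fun _ => measure_ne_top _ _) ENNReal.zero_ne_top).1
      (by simpa using htail x hx)
  have htrunc1 : Tendsto (fun η => ∫ ω, {ω | S η ω ≤ 1}.indicator (S η) ω) l (𝓝 0) := by
    simpa only [mul_indicator_one_apply] using htrunc 1 one_pos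
  have hXpos : ∀ᵐ ω ∂ℙ, 0 < X ω := by
    filter_upwards [hXnn, measure_eq_zero_iff_ae_notMem.1 hX0] with ω hω hω0
    exact hω.lt_of_ne (Ne.symm hω0)
  have h1 : Tendsto (fun η => (ℙ {ω | S η ω < X ω}).toReal) l (𝓝 1) :=
    tendsto_measureReal_setOf_lt_of_tendsto_measure_gt hXmeas hSmeas hXpos htail'
  have h2 := tendsto_integral_of_le_min (f := fun η => {ω | S η ω < X ω}.indicator (S η)) 1
    hXint hSmeas hSnn
    (fun η => by filter_upwards [hSnn η] with ω hω using indicator_nonneg (fun _ _ => hω) ω)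
    (fun η => by filter_upwards [hXnn, hSnn η] using fun _ => indicator_setOf_lt_le_min)
    (htail' 1 one_pos) htrunc1
  have h3 := tendsto_integral_of_le_min (f := fun η ω => min (X ω) (S η ω)) 1
    hXint hSmeas hSnn (fun η => by filter_upwards [hXnn, hSnn η] with ω using le_min)
    (fun η => ae_of_all _ fun ω => le_rfl) (htail' 1 one_pos) htrunc1
  simp only [mul_indicator_one_apply]
  refine ⟨h1, h2, h3, ?_, ?_⟩
  · simpa using (tendsto_const_nhds.div h1 one_ne_zero).add (h2.div h1 one_ne_zero)
  · simpa using tendsto_const_nhds.add (h3.div h1 one_ne_zero)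

/-- Sufficient conditions for a parametric service distribution `S_η` to achieve
the age lower bounds of the preemptive LCFS G/G/1 queue in the limit `η → η*`:
if `P(S_η > x) → 0` and `E[S_η 1{S_η ≤ x}] → 0` for every `x > 0`, then
`P(S_η < X) → 1`, `E[S_η 1{S_η < X}] → 0`, `E[min(X, S_η)] → 0`, the peak age
converges to `E[X]` and the average age converges to `½E[X²]/E[X]`. -/
theorem LCFS_heavy_tail_achieves_bounds
    {Ω : Type*} [MeasureSpace Ω] [IsProbabilityMeasure (ℙ : Measure Ω)]
    {ι : Type*} (l : Filter ι)
    (X : Ω → ℝ) (S : ι → Ω → ℝ)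
    (hXnn : ∀ᵐ ω ∂ℙ, 0 ≤ X ω) (hX0 : ℙ {ω | X ω = 0} = 0)
    (hXmeas : Measurable X)
    (hXint : Integrable X ℙ) (hX2int : Integrable (fun ω => (X ω) ^ 2) ℙ)
    (hEXpos : 0 < 𝔼[X])
    (hSnn : ∀ η, ∀ᵐ ω ∂ℙ, 0 ≤ S η ω) (hSmeas : ∀ η, Measurable (S η))
    (hSint : ∀ η, Integrable (S η) ℙ)
    (hindep : ∀ η, IndepFun X (S η) ℙ)
    (htail : ∀ x : ℝ, 0 < x →
      Tendsto (fun η => (ℙ {ω | x < S η ω}).toReal) l (𝓝 0))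
    (htrunc : ∀ x : ℝ, 0 < x →
      Tendsto (fun η =>
        𝔼[fun ω => S η ω * Set.indicator {ω' | S η ω' ≤ x} (fun _ => (1:ℝ)) ω]) l (𝓝 0)) :
    Tendsto (fun η => (ℙ {ω | S η ω < X ω}).toReal) l (𝓝 1) ∧
    Tendsto (fun η =>
      𝔼[fun ω => S η ω * Set.indicator {ω' | S η ω' < X ω'} (fun _ => (1:ℝ)) ω]) l (𝓝 0) ∧
    Tendsto (fun η => 𝔼[fun ω => min (X ω) (S η ω)]) l (𝓝 0) ∧
    Tendsto (fun η =>
      𝔼[X] / (ℙ {ω | S η ω < X ω}).toReal +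
        𝔼[fun ω => S η ω * Set.indicator {ω' | S η ω' < X ω'} (fun _ => (1:ℝ)) ω] /
          (ℙ {ω | S η ω < X ω}).toReal) l (𝓝 (𝔼[X])) ∧
    Tendsto (fun η =>
      (1 / 2) * 𝔼[fun ω => (X ω) ^ 2] / 𝔼[X] +
        𝔼[fun ω => min (X ω) (S η ω)] / (ℙ {ω | S η ω < X ω}).toReal) l
      (𝓝 ((1 / 2) * 𝔼[fun ω => (X ω) ^ 2] / 𝔼[X])) :=
  LCFS_heavy_tail_achieves_bounds_general l X S hXnn hX0 hXmeas hXint hSnn hSmeas htail htrunc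
end

section
/- Let X be exponential with rate λ > 0, and S ≥ 0 independent of X with E[S] = 1/μ and E[e^{−λS}] > 0. Then E[X]/P(S<X) + E[S·1{S<X}]/P(S<X) ≤ (1/λ)e^{λ/μ} + 1/μ, and the right side equals the peak age when S is deterministic equal to 1/μ. -/
open MeasureTheory ProbabilityTheory Real Set

/-!
Conditioning on `S` and using `P(X > s) = e^{-λs}` for `s ≥ 0`, independence gives
`P(S < X) = E[e^{-λS}]` and `E[S·1{S<X}] = E[S e^{-λS}]`, so the peak age equals
`(1/λ + E[S e^{-λS}]) / E[e^{-λS}]`. Jensen's inequality gives `E[e^{-λS}] ≥ e^{-λ/μ}`, and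
since `S` and `e^{-λS}` are oppositely ordered, Chebyshev's integral inequality gives
`E[S e^{-λS}] ≤ E[S] E[e^{-λS}]`. For `S ≡ 1/μ` both are equalities.
-/

theorem Antivary.integral_mul_le_integral_mul_integral {α : Type*} [MeasurableSpace α]
    {μ : Measure α} [IsProbabilityMeasure μ] {f g : α → ℝ} (hfg : Antivary f g)
    (hf : Integrable f μ) (hg : Integrable g μ)
    (hfg_int : Integrable (fun a => f a * g a) μ) :
    ∫ a, f a * g a ∂μ ≤ (∫ a, f a ∂μ) * ∫ a, g a ∂μ := by
  -- integrate the rearrangement inequality `f a g a + f b g b ≤ f a g b + f b g a` in `a`,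
  -- then in `b`
  have hpoint (b : α) :
      ∫ a, f a * g a ∂μ + f b * g b ≤ (∫ a, f a ∂μ) * g b + f b * ∫ a, g a ∂μ := by
    have h := integral_mono (μ := μ) (hfg_int.add (integrable_const (f b * g b)))
      ((hf.mul_const (g b)).add (hg.const_mul (f b)))
      fun a => antivary_iff_mul_rearrangement.1 hfg a b
    simpa only [Pi.add_apply, integral_add hfg_int (integrable_const _), integral_const,
      probReal_univ, one_smul, integral_add (hf.mul_const _) (hg.const_mul _), integral_mul_const,
      integral_const_mul] using h
  have h := integral_mono (μ := μ) ((integrable_const _).add hfg_int)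
    ((hg.const_mul _).add (hf.mul_const _)) hpoint
  simp only [Pi.add_apply, integral_add (integrable_const _) hfg_int, integral_const,
    probReal_univ, one_smul, integral_add (hg.const_mul _) (hf.mul_const _), integral_mul_const,
    integral_const_mul] at h
  linarith

namespace ProbabilityTheory

lemma measureReal_expMeasure_Ioi {r x : ℝ} (hr : 0 < r) (hx : 0 ≤ x) :
    (expMeasure r).real (Ioi x) = exp (-(r * x)) := by
  have := isProbabilityMeasure_expMeasure hr
  rw [← compl_Iic, probReal_compl_eq_one_sub measurableSet_Iic, ← cdf_eq_real,
    cdf_expMeasure_eq hr, if_pos hx, sub_sub_cancel]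

lemma integral_id_expMeasure {r : ℝ} (hr : 0 < r) : ∫ x, x ∂expMeasure r = 1 / r := by
  have hdensity (x : ℝ) : (gammaPDF 1 r x).toReal • x
      = (Ioi 0).indicator (fun x => r * (x ^ ((2 : ℝ) - 1) * exp (-(r * x)))) x := by
    rw [gammaPDF, ENNReal.toReal_ofReal (gammaPDFReal_nonneg one_pos hr x), smul_eq_mul,
      gammaPDFReal]
    rcases le_or_gt x 0 with hx | hx
    · rw [indicator_of_notMem (notMem_Ioi.2 hx)]
      split_ifs with h0
      · simp [le_antisymm hx h0]
      · rw [zero_mul]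
    · rw [indicator_of_mem (mem_Ioi.2 hx), if_pos hx.le]
      norm_num
      ring
  rw [expMeasure, gammaMeasure, integral_withDensity_eq_integral_toReal_smul (f := gammaPDF 1 r)
    (measurable_gammaPDFReal 1 r).ennreal_ofReal (ae_of_all _ fun _ => ENNReal.ofReal_lt_top)]
  simp_rw [hdensity]
  rw [integral_indicator measurableSet_Ioi, integral_const_mul,
    integral_rpow_mul_exp_neg_mul_Ioi two_pos hr]
  norm_num [Gamma_two]
  field_simp

section
variable {Ω : Type*} [MeasurableSpace Ω] {μ : Measure Ω} {S X : Ω → ℝ} {lam : ℝ}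

lemma ae_norm_exp_neg_mul_le_one (hlam : 0 ≤ lam) (hSnn : ∀ᵐ ω ∂μ, 0 ≤ S ω) :
    ∀ᵐ ω ∂μ, ‖exp (-lam * S ω)‖ ≤ 1 := by
  filter_upwards [hSnn] with ω hω
  rw [norm_of_nonneg (exp_pos _).le, exp_le_one_iff]
  nlinarith

lemma integrable_exp_neg_mul [IsFiniteMeasure μ] (hS : AEMeasurable S μ) (hlam : 0 ≤ lam)
    (hSnn : ∀ᵐ ω ∂μ, 0 ≤ S ω) : Integrable (fun ω => exp (-lam * S ω)) μ :=
  (integrable_const (1 : ℝ)).mono' (by fun_prop) (ae_norm_exp_neg_mul_le_one hlam hSnn)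

lemma exp_neg_mul_integral_le_integral_exp_neg_mul [IsProbabilityMeasure μ] (hlam : 0 ≤ lam)
    (hSnn : ∀ᵐ ω ∂μ, 0 ≤ S ω) (hSint : Integrable S μ) :
    exp (-lam * ∫ ω, S ω ∂μ) ≤ ∫ ω, exp (-lam * S ω) ∂μ := by
  have h := convexOn_exp.map_integral_le continuousOn_exp isClosed_univ
    (ae_of_all _ fun _ => mem_univ _) (hSint.const_mul (-lam))
    (integrable_exp_neg_mul hSint.aemeasurable hlam hSnn)
  rwa [integral_const_mul] at h

lemma integral_mul_exp_neg_mul_le [IsProbabilityMeasure μ] (hlam : 0 ≤ lam)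
    (hSnn : ∀ᵐ ω ∂μ, 0 ≤ S ω) (hSint : Integrable S μ) :
    ∫ ω, S ω * exp (-lam * S ω) ∂μ ≤ (∫ ω, S ω ∂μ) * ∫ ω, exp (-lam * S ω) ∂μ := by
  have hanti : Antivary S fun ω => exp (-lam * S ω) :=
    (monotone_id.antivary fun _ _ h => exp_le_exp.2 (by nlinarith)).comp_right S
  exact hanti.integral_mul_le_integral_mul_integral hSint
    (integrable_exp_neg_mul hSint.aemeasurable hlam hSnn)
    (hSint.mul_bdd (by fun_prop) (ae_norm_exp_neg_mul_le_one hlam hSnn))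

lemma integral_comp_mul_indicator_lt_of_indepFun [IsProbabilityMeasure μ] (hS : Measurable S)
    (hX : Measurable X) (hindep : IndepFun S X μ) {g : ℝ → ℝ} (hg : Measurable g)
    (hgS : Integrable (fun ω => g (S ω)) μ) :
    ∫ ω, g (S ω) * {ω | S ω < X ω}.indicator (fun _ => (1 : ℝ)) ω ∂μ
      = ∫ ω, g (S ω) * (μ.map X).real (Ioi (S ω)) ∂μ := by
  have hlt : MeasurableSet {p : ℝ × ℝ | p.1 < p.2} :=
    measurableSet_lt measurable_fst measurable_snd
  set F : ℝ × ℝ → ℝ := fun p => g p.1 * {p : ℝ × ℝ | p.1 < p.2}.indicator (fun _ => 1) p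
  have hF : Measurable F := (hg.comp measurable_fst).mul (measurable_const.indicator hlt)
  have hF_int : Integrable F ((μ.map S).prod (μ.map X)) := by
    refine ((integrable_map_measure hg.aestronglyMeasurable hS.aemeasurable).2 hgS).comp_fst
      _ |>.bdd_mul (c := 1) (measurable_const.indicator hlt).aestronglyMeasurable
      (ae_of_all _ fun p => ?_) |>.congr (ae_of_all _ fun p => mul_comm _ _)
    by_cases h : p.1 < p.2 <;> simp [h]
  have hinner (s : ℝ) : ∫ x, F (s, x) ∂(μ.map X) = g s * (μ.map X).real (Ioi s) := by
    simp only [F, integral_const_mul]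
    rw [← integral_indicator_one measurableSet_Ioi]
    rfl
  have hsurv : Measurable fun s => (μ.map X).real (Ioi s) :=
    Antitone.measurable fun _ _ h => measureReal_mono (Ioi_subset_Ioi h)
  calc ∫ ω, g (S ω) * {ω | S ω < X ω}.indicator (fun _ => (1 : ℝ)) ω ∂μ
      = ∫ p, F p ∂(μ.map fun ω => (S ω, X ω)) :=
        (integral_map (hS.prodMk hX).aemeasurable hF.aestronglyMeasurable).symm
    _ = ∫ s, g s * (μ.map X).real (Ioi s) ∂(μ.map S) := by
        rw [hindep.map_prod_eq_prod_map_map hS.aemeasurable hX.aemeasurable,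
          integral_prod F hF_int]
        simp_rw [hinner]
    _ = ∫ ω, g (S ω) * (μ.map X).real (Ioi (S ω)) ∂μ :=
        integral_map hS.aemeasurable (hg.mul hsurv).aestronglyMeasurable

lemma integral_comp_mul_indicator_lt_of_map_eq_expMeasure [IsProbabilityMeasure μ]
    (hlam : 0 < lam) (hS : Measurable S) (hX : Measurable X) (hXlaw : μ.map X = expMeasure lam)
    (hSnn : ∀ᵐ ω ∂μ, 0 ≤ S ω) (hindep : IndepFun S X μ) {g : ℝ → ℝ} (hg : Measurable g)
    (hgS : Integrable (fun ω => g (S ω)) μ) :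
    ∫ ω, g (S ω) * {ω | S ω < X ω}.indicator (fun _ => (1 : ℝ)) ω ∂μ
      = ∫ ω, g (S ω) * exp (-lam * S ω) ∂μ := by
  rw [integral_comp_mul_indicator_lt_of_indepFun hS hX hindep hg hgS, hXlaw]
  refine integral_congr_ae ?_
  filter_upwards [hSnn] with ω hω
  rw [measureReal_expMeasure_Ioi hlam hω, neg_mul]

theorem peakAge_eq_of_map_eq_expMeasure [IsProbabilityMeasure μ] (hlam : 0 < lam)
    (hS : Measurable S) (hX : Measurable X) (hXlaw : μ.map X = expMeasure lam)
    (hSnn : ∀ᵐ ω ∂μ, 0 ≤ S ω) (hSint : Integrable S μ) (hindep : IndepFun S X μ) :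
    (∫ ω, X ω ∂μ) / (μ {ω | S ω < X ω}).toReal
        + (∫ ω, S ω * {ω | S ω < X ω}.indicator (fun _ => (1 : ℝ)) ω ∂μ)
          / (μ {ω | S ω < X ω}).toReal
      = (1 / lam) / ∫ ω, exp (-lam * S ω) ∂μ
        + (∫ ω, S ω * exp (-lam * S ω) ∂μ) / ∫ ω, exp (-lam * S ω) ∂μ := by
  have hEX : ∫ ω, X ω ∂μ = 1 / lam := by
    have h := integral_map (μ := μ) (f := fun x : ℝ => x) hX.aemeasurable
      aestronglyMeasurable_id
    rwa [hXlaw, integral_id_expMeasure hlam, eq_comm] at h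
  have hP : (μ {ω | S ω < X ω}).toReal = ∫ ω, exp (-lam * S ω) ∂μ := by
    have h := integral_comp_mul_indicator_lt_of_map_eq_expMeasure hlam hS hX hXlaw hSnn hindep
      measurable_const (integrable_const (1 : ℝ))
    simp only [one_mul] at h
    rw [← measureReal_def, ← integral_indicator_one (measurableSet_lt hS hX), ← h]
    rfl
  rw [hEX, hP, integral_comp_mul_indicator_lt_of_map_eq_expMeasure hlam hS hX hXlaw hSnn hindep
    (g := fun s => s) measurable_id hSint]

end

end ProbabilityTheory

theorem LCFS_MG1_peak_age_deterministic_worst_general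
    {Ω : Type*} [MeasureSpace Ω] [IsProbabilityMeasure (ℙ : Measure Ω)]
    (X S : Ω → ℝ) (lam mu : ℝ) (hlam : 0 < lam) (hmu : 0 < mu)
    (hXmeas : Measurable X) (hSmeas : Measurable S)
    (hX : Measure.map X ℙ = expMeasure lam)
    (hSnn : ∀ᵐ ω ∂ℙ, 0 ≤ S ω) (hSint : Integrable S ℙ)
    (hindep : IndepFun X S ℙ)
    (hES : 𝔼[S] = 1 / mu) :
    𝔼[X] / (ℙ {ω | S ω < X ω}).toReal +
      𝔼[fun ω => S ω * Set.indicator {ω' | S ω' < X ω'} (fun _ => (1:ℝ)) ω] /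
        (ℙ {ω | S ω < X ω}).toReal ≤ (1 / lam) * exp (lam / mu) + 1 / mu ∧
    𝔼[X] / (ℙ {ω | (1:ℝ) / mu < X ω}).toReal +
      𝔼[fun ω => (1 / mu) * Set.indicator {ω' | (1:ℝ) / mu < X ω'} (fun _ => (1:ℝ)) ω] /
        (ℙ {ω | (1:ℝ) / mu < X ω}).toReal = (1 / lam) * exp (lam / mu) + 1 / mu := by
  have hjensen : exp (-(lam / mu)) ≤ ∫ ω, exp (-lam * S ω) := by
    simpa only [hES, mul_one_div, neg_mul, neg_div] using
      exp_neg_mul_integral_le_integral_exp_neg_mul hlam.le hSnn hSint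
  have hchebyshev : ∫ ω, S ω * exp (-lam * S ω) ≤ 1 / mu * ∫ ω, exp (-lam * S ω) :=
    hES ▸ integral_mul_exp_neg_mul_le hlam.le hSnn hSint
  constructor
  · rw [peakAge_eq_of_map_eq_expMeasure hlam hSmeas hXmeas hX hSnn hSint hindep.symm]
    gcongr ?_ + ?_
    · calc 1 / lam / ∫ ω, exp (-lam * S ω) ≤ 1 / lam / exp (-(lam / mu)) :=
            div_le_div_of_nonneg_left (by positivity) (exp_pos _) hjensen
        _ = 1 / lam * exp (lam / mu) := by rw [exp_neg, div_inv_eq_mul]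
    · exact div_le_of_le_mul₀ ((exp_pos _).le.trans hjensen) (by positivity) hchebyshev
  · have h := peakAge_eq_of_map_eq_expMeasure (S := fun _ => 1 / mu) hlam measurable_const
      hXmeas hX (ae_of_all _ fun _ => by positivity) (integrable_const _)
      (indepFun_const_left _ _)
    simp only [integral_const, probReal_univ, one_smul] at h
    rw [h, mul_div_assoc, div_self (exp_pos _).ne', mul_one, div_eq_mul_inv, ← exp_neg,
      neg_mul, neg_neg, mul_one_div]

/-- Peak age of the preemptive LCFS M/G/1 queue is maximized by deterministic
service: `E[X]/P(S<X) + E[S·1{S<X}]/P(S<X) ≤ (1/λ)e^{λ/μ} + 1/μ`, and the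
right side is the peak age when `S = 1/μ` deterministically. -/
theorem LCFS_MG1_peak_age_deterministic_worst
    {Ω : Type*} [MeasureSpace Ω] [IsProbabilityMeasure (ℙ : Measure Ω)]
    (X S : Ω → ℝ) (lam mu : ℝ) (hlam : 0 < lam) (hmu : 0 < mu)
    (hXmeas : Measurable X) (hSmeas : Measurable S)
    (hX : Measure.map X ℙ = expMeasure lam)
    (hSnn : ∀ᵐ ω ∂ℙ, 0 ≤ S ω) (hSint : Integrable S ℙ)
    (hindep : IndepFun X S ℙ)
    (hES : 𝔼[S] = 1 / mu)
    (hMS : 0 < 𝔼[fun ω => exp (-lam * S ω)]) :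
    𝔼[X] / (ℙ {ω | S ω < X ω}).toReal +
      𝔼[fun ω => S ω * Set.indicator {ω' | S ω' < X ω'} (fun _ => (1:ℝ)) ω] /
        (ℙ {ω | S ω < X ω}).toReal ≤ (1 / lam) * exp (lam / mu) + 1 / mu ∧
    𝔼[X] / (ℙ {ω | (1:ℝ) / mu < X ω}).toReal +
      𝔼[fun ω => (1 / mu) * Set.indicator {ω' | (1:ℝ) / mu < X ω'} (fun _ => (1:ℝ)) ω] /
        (ℙ {ω | (1:ℝ) / mu < X ω}).toReal = (1 / lam) * exp (lam / mu) + 1 / mu :=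
  LCFS_MG1_peak_age_deterministic_worst_general X S lam mu hlam hmu hXmeas hSmeas hX hSnn hSint
    hindep hES
end

section
/- Let X and S be independent nonnegative random variables, with S exponentially distributed with rate μ > 0 and P(S < X) > 0. Then E[min(X, S)]/P(S < X) = 1/μ = E[S]. -/
/-!
Memorylessness of the exponential law, in the form of a constant hazard rate: the density of
`expMeasure r` at `t ≥ 0` is `r` times the tail `P(S > t)`. By the layer-cake formula
`E[min(x, S)] = ∫₀ˣ P(S > t) dt`, which is therefore `P(S < x) / r`; integrating over the law
of the independent `X` gives `E[min(X, S)] = P(S < X) / r`. The same computation over `(0, ∞)`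
gives `E[S] = 1 / r`.
-/

open MeasureTheory ProbabilityTheory Set Real

namespace ProbabilityTheory

variable {r : ℝ}

lemma expMeasure_Iic (hr : 0 < r) {x : ℝ} (hx : 0 ≤ x) :
    expMeasure r (Iic x) = ENNReal.ofReal (1 - exp (-(r * x))) := by
  have := isProbabilityMeasure_expMeasure hr
  rw [← ofReal_cdf, cdf_expMeasure_eq hr, if_pos hx]

lemma expMeasure_Ioi (hr : 0 < r) {t : ℝ} (ht : 0 ≤ t) :
    expMeasure r (Ioi t) = ENNReal.ofReal (exp (-(r * t))) := by
  have := isProbabilityMeasure_expMeasure hr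
  rw [← compl_Iic, prob_compl_eq_one_sub measurableSet_Iic, expMeasure_Iic hr ht,
    ← ENNReal.ofReal_one, ← ENNReal.ofReal_sub _
    (sub_nonneg.mpr (exp_le_one_iff.mpr (neg_nonpos.mpr (mul_nonneg hr.le ht))))]
  ring_nf

lemma expMeasure_Iic_zero (hr : 0 < r) : expMeasure r (Iic 0) = 0 := by
  simp [expMeasure_Iic hr le_rfl]

lemma ae_nonneg_expMeasure (hr : 0 < r) : ∀ᵐ s ∂expMeasure r, 0 ≤ s :=
  measure_mono_null (fun s (hs : ¬ 0 ≤ s) => (not_le.mp hs).le) (expMeasure_Iic_zero hr)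

lemma exponentialPDF_eq_mul_expMeasure_Ioi (hr : 0 < r) {t : ℝ} (ht : 0 ≤ t) :
    exponentialPDF r t = ENNReal.ofReal r * expMeasure r (Ioi t) := by
  rw [exponentialPDF_of_nonneg ht, expMeasure_Ioi hr ht, ENNReal.ofReal_mul hr.le]

lemma setLIntegral_expMeasure_Ioi (hr : 0 < r) {A : Set ℝ} (hA : MeasurableSet A)
    (hA0 : A ⊆ Ici 0) :
    ∫⁻ t in A, expMeasure r (Ioi t) = expMeasure r A / ENNReal.ofReal r := by
  rw [ENNReal.eq_div_iff (by simpa using hr) ENNReal.ofReal_ne_top,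
    ← lintegral_const_mul' _ _ ENNReal.ofReal_ne_top]
  change _ = volume.withDensity (exponentialPDF r) A
  rw [withDensity_apply _ hA]
  exact setLIntegral_congr_fun hA fun t ht => (exponentialPDF_eq_mul_expMeasure_Ioi hr (hA0 ht)).symm

lemma lintegral_ofReal_min_expMeasure (hr : 0 < r) {x : ℝ} (hx : 0 ≤ x) :
    ∫⁻ s, ENNReal.ofReal (min x s) ∂expMeasure r = expMeasure r (Iio x) / ENNReal.ofReal r := by
  have hsection (t : ℝ) :
      expMeasure r {s | t < min x s} = (Iio x).indicator (fun t => expMeasure r (Ioi t)) t := by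
    by_cases ht : t < x <;> simp [ht, Ioi]
  rw [lintegral_eq_lintegral_meas_lt _
      (by filter_upwards [ae_nonneg_expMeasure hr] with s hs using le_min hx hs)
      (by fun_prop),
    lintegral_congr hsection, setLIntegral_indicator measurableSet_Iio,
    setLIntegral_expMeasure_Ioi hr (measurableSet_Iio.inter measurableSet_Ioi)
      (inter_subset_right.trans Ioi_subset_Ici_self),
    measure_inter_conull (by rw [compl_Ioi]; exact expMeasure_Iic_zero hr)]

lemma integral_id_expMeasure_s15 (hr : 0 < r) : ∫ s, s ∂expMeasure r = r⁻¹ := by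
  have hIoi : expMeasure r (Ioi 0) = 1 := by simp [expMeasure_Ioi hr le_rfl]
  rw [integral_eq_lintegral_of_nonneg_ae (ae_nonneg_expMeasure hr) aestronglyMeasurable_id,
    lintegral_eq_lintegral_meas_lt _ (ae_nonneg_expMeasure hr) aemeasurable_id]
  change (∫⁻ t in Ioi 0, expMeasure r (Ioi t)).toReal = r⁻¹
  rw [setLIntegral_expMeasure_Ioi hr measurableSet_Ioi Ioi_subset_Ici_self, hIoi, one_div,
    ENNReal.toReal_inv, ENNReal.toReal_ofReal hr.le]

variable {Ω : Type*} [MeasurableSpace Ω] {μ : Measure Ω} [IsFiniteMeasure μ] {X S : Ω → ℝ}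

lemma lintegral_min_of_indepFun_expMeasure (hr : 0 < r) (hX : Measurable X) (hS : Measurable S)
    (hX0 : ∀ᵐ ω ∂μ, 0 ≤ X ω) (hSexp : μ.map S = expMeasure r) (hXS : IndepFun X S μ) :
    ∫⁻ ω, ENNReal.ofReal (min (X ω) (S ω)) ∂μ = μ {ω | S ω < X ω} / ENNReal.ofReal r := by
  have := isProbabilityMeasure_expMeasure hr
  have hjoint : μ.map (fun ω => (X ω, S ω)) = (μ.map X).prod (expMeasure r) := by
    rw [← hSexp]
    exact (indepFun_iff_map_prod_eq_prod_map_map hX.aemeasurable hS.aemeasurable).mp hXS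
  have hX0' : ∀ᵐ x ∂μ.map X, 0 ≤ x := (ae_map_iff hX.aemeasurable measurableSet_Ici).mpr hX0
  have hlt : MeasurableSet {p : ℝ × ℝ | p.2 < p.1} := measurableSet_lt measurable_snd measurable_fst
  have hprob : μ {ω | S ω < X ω} = ∫⁻ x, expMeasure r (Iio x) ∂μ.map X := by
    rw [show {ω | S ω < X ω} = (fun ω => (X ω, S ω)) ⁻¹' {p : ℝ × ℝ | p.2 < p.1} from rfl,
      ← Measure.map_apply (hX.prodMk hS) hlt, hjoint, Measure.prod_apply hlt]
    rfl
  have hmin : Measurable fun p : ℝ × ℝ => ENNReal.ofReal (min p.1 p.2) := by fun_prop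
  calc ∫⁻ ω, ENNReal.ofReal (min (X ω) (S ω)) ∂μ
      = ∫⁻ x, ∫⁻ s, ENNReal.ofReal (min x s) ∂expMeasure r ∂μ.map X := by
        rw [← lintegral_prod _ hmin.aemeasurable, ← hjoint, lintegral_map hmin (hX.prodMk hS)]
    _ = ∫⁻ x, expMeasure r (Iio x) / ENNReal.ofReal r ∂μ.map X := by
        refine lintegral_congr_ae ?_
        filter_upwards [hX0'] with x hx using lintegral_ofReal_min_expMeasure hr hx
    _ = μ {ω | S ω < X ω} / ENNReal.ofReal r := by
        simp_rw [hprob, div_eq_mul_inv]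
        exact lintegral_mul_const' _ _ (ENNReal.inv_ne_top.mpr (by simpa using hr))

theorem integral_min_of_indepFun_expMeasure (hr : 0 < r) (hX : Measurable X) (hS : Measurable S)
    (hX0 : ∀ᵐ ω ∂μ, 0 ≤ X ω) (hSexp : μ.map S = expMeasure r) (hXS : IndepFun X S μ) :
    μ[fun ω => min (X ω) (S ω)] = μ.real {ω | S ω < X ω} / r := by
  have hS0 : ∀ᵐ ω ∂μ, 0 ≤ S ω := ae_of_ae_map hS.aemeasurable (hSexp ▸ ae_nonneg_expMeasure hr)
  rw [integral_eq_lintegral_of_nonneg_ae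
      (by filter_upwards [hX0, hS0] with ω hXω hSω using le_min hXω hSω) (by fun_prop),
    lintegral_min_of_indepFun_expMeasure hr hX hS hX0 hSexp hXS, ENNReal.toReal_div,
    ENNReal.toReal_ofReal hr.le, measureReal_def]

end ProbabilityTheory

/-- Memorylessness consequence for the preemptive LCFS G/M/1 queue: if `S` is
exponential with rate `μ`, independent of `X ≥ 0`, and `P(S < X) > 0`, then
`E[min(X, S)]/P(S < X) = 1/μ = E[S]`. -/
theorem LCFS_GM1_min_over_prob
    {Ω : Type*} [MeasureSpace Ω] [IsProbabilityMeasure (ℙ : Measure Ω)]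
    (X S : Ω → ℝ) (mu : ℝ) (hmu : 0 < mu)
    (hXmeas : Measurable X) (hSmeas : Measurable S)
    (hXnn : ∀ᵐ ω ∂ℙ, 0 ≤ X ω)
    (hS : Measure.map S ℙ = expMeasure mu)
    (hindep : IndepFun X S ℙ)
    (hP0 : 0 < (ℙ {ω | S ω < X ω}).toReal) :
    𝔼[fun ω => min (X ω) (S ω)] / (ℙ {ω | S ω < X ω}).toReal = 1 / mu ∧
    (1 : ℝ) / mu = 𝔼[S] := by
  constructor
  · rw [integral_min_of_indepFun_expMeasure hmu hXmeas hSmeas hXnn hS hindep, measureReal_def]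
    field_simp [hP0.ne']
  · rw [one_div, ← integral_id_expMeasure_s15 hmu, ← hS]
    exact integral_map hSmeas.aemeasurable aestronglyMeasurable_id
end

section
/- Let X ≥ 0 with E[X] = 1/λ, and S exponential with rate μ, independent of X. Then (1/μ) + E[X(1 − e^{−μX})]/E[1 − e^{−μX}] ≥ 1/μ + 1/λ, i.e., the peak age of the preemptive LCFS G/M/1 queue is minimized by deterministic X. -/
/-!
Since `t ↦ 1 - exp (-μ t)` is increasing, `X` and `1 - exp (-μ X)` are positively correlated
(Chebyshev's association inequality), so `E[X (1 - exp (-μ X))] ≥ E[X] E[1 - exp (-μ X)]`;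
divide by the denominator. It vanishes only when `X = 0` a.s., and then both sides are `0`
(with the convention `x / 0 = 0`).
-/

open MeasureTheory ProbabilityTheory Real

theorem integral_mul_integral_le_integral_mul_of_monovary {α : Type*} [MeasurableSpace α]
    {μ : Measure α} [IsProbabilityMeasure μ] {f g : α → ℝ} (hfg : Monovary f g)
    (hf : Integrable f μ) (hg : Integrable g μ) (hfg' : Integrable (fun x => f x * g x) μ) :
    (∫ x, f x ∂μ) * ∫ x, g x ∂μ ≤ ∫ x, f x * g x ∂μ := by
  -- integrate the rearrangement inequality `f x g y + f y g x ≤ f x g x + f y g y` over `μ × μ`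
  have h := integral_mono ((hf.mul_prod hg).add (hg.mul_prod hf))
    ((hfg'.comp_fst μ).add (hfg'.comp_snd μ)) fun z : α × α => by
      simpa only [Pi.add_apply, mul_comm (g z.1)] using hfg.mul_add_mul_le_mul_add_mul z.1 z.2
  rw [integral_add' (hf.mul_prod hg) (hg.mul_prod hf),
    integral_add' (hfg'.comp_fst μ) (hfg'.comp_snd μ), integral_prod_mul, integral_prod_mul,
    integral_fun_fst (fun x => f x * g x), integral_fun_snd (fun x => f x * g x)] at h
  simp only [probReal_univ, one_smul] at h
  linarith

section OneSubExpNegMul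

variable {r : ℝ}

theorem monotone_one_sub_exp_neg_mul (hr : 0 ≤ r) : Monotone fun t => 1 - exp (-r * t) :=
  fun _ _ hst => sub_le_sub_left (exp_le_exp.2 (by nlinarith)) 1

theorem one_sub_exp_neg_mul_nonneg (hr : 0 ≤ r) {t : ℝ} (ht : 0 ≤ t) : 0 ≤ 1 - exp (-r * t) := by
  simpa using monotone_one_sub_exp_neg_mul hr ht

theorem one_sub_exp_neg_mul_eq_zero_iff (hr : r ≠ 0) {t : ℝ} : 1 - exp (-r * t) = 0 ↔ t = 0 := by
  rw [sub_eq_zero, eq_comm, exp_eq_one_iff, mul_eq_zero, neg_eq_zero]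
  exact or_iff_right hr

theorem norm_one_sub_exp_neg_mul_le_one (hr : 0 ≤ r) {t : ℝ} (ht : 0 ≤ t) :
    ‖1 - exp (-r * t)‖ ≤ 1 := by
  rw [norm_of_nonneg (one_sub_exp_neg_mul_nonneg hr ht)]
  linarith [exp_pos (-r * t)]

end OneSubExpNegMul

theorem integral_le_integral_mul_one_sub_exp_div {Ω : Type*} [MeasurableSpace Ω]
    {μ : Measure Ω} [IsProbabilityMeasure μ] {X : Ω → ℝ} {r : ℝ} (hr : 0 < r)
    (hX : ∀ᵐ ω ∂μ, 0 ≤ X ω) (hXi : Integrable X μ) :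
    ∫ ω, X ω ∂μ ≤
      (∫ ω, X ω * (1 - exp (-r * X ω)) ∂μ) / ∫ ω, 1 - exp (-r * X ω) ∂μ := by
  set w : Ω → ℝ := fun ω => 1 - exp (-r * X ω)
  have hw_meas : AEStronglyMeasurable w μ := by fun_prop
  have hw_bound : ∀ᵐ ω ∂μ, ‖w ω‖ ≤ 1 := by
    filter_upwards [hX] with ω hω using norm_one_sub_exp_neg_mul_le_one hr.le hω
  have hw_nonneg : 0 ≤ᵐ[μ] w := by
    filter_upwards [hX] with ω hω using one_sub_exp_neg_mul_nonneg hr.le hω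
  have hw_int : Integrable w μ := (integrable_const 1).mono' hw_meas hw_bound
  rcases (integral_nonneg_of_ae hw_nonneg).eq_or_lt with hzero | hpos
  · have hX0 : X =ᵐ[μ] 0 := by
      filter_upwards [(integral_eq_zero_iff_of_nonneg_ae hw_nonneg hw_int).1 hzero.symm]
        with ω hω using (one_sub_exp_neg_mul_eq_zero_iff hr.ne').1 hω
    rw [← hzero, div_zero, integral_eq_zero_of_ae hX0]
  · rw [le_div_iff₀ hpos]
    exact integral_mul_integral_le_integral_mul_of_monovary
      ((monovary_self X).comp_monotone_left (monotone_one_sub_exp_neg_mul hr.le)).symm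
      hXi hw_int (hXi.mul_bdd hw_meas hw_bound)

theorem LCFS_GM1_peak_age_deterministic_minimizes_general
    {Ω : Type*} [MeasureSpace Ω] [IsProbabilityMeasure (ℙ : Measure Ω)]
    (X : Ω → ℝ) (lam mu : ℝ) (hmu : 0 < mu)
    (hXnn : ∀ᵐ ω ∂ℙ, 0 ≤ X ω)
    (hXint : Integrable X ℙ) (hEX : 𝔼[X] = 1 / lam) :
    1 / mu + 1 / lam ≤
      1 / mu + 𝔼[fun ω => X ω * (1 - exp (-mu * X ω))] /
        𝔼[fun ω => 1 - exp (-mu * X ω)] := by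
  rw [← hEX]
  exact add_le_add_right (integral_le_integral_mul_one_sub_exp_div hmu hXnn hXint) _

/-- The peak age of the preemptive LCFS G/M/1 queue,
`1/μ + E[X(1 − e^{−μX})]/E[1 − e^{−μX}]`, is at least `1/μ + 1/λ`, the value
attained by deterministic inter-generation times. -/
theorem LCFS_GM1_peak_age_deterministic_minimizes
    {Ω : Type*} [MeasureSpace Ω] [IsProbabilityMeasure (ℙ : Measure Ω)]
    (X S : Ω → ℝ) (lam mu : ℝ) (hlam : 0 < lam) (hmu : 0 < mu)
    (hXmeas : Measurable X) (hSmeas : Measurable S)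
    (hXnn : ∀ᵐ ω ∂ℙ, 0 ≤ X ω)
    (hXint : Integrable X ℙ) (hEX : 𝔼[X] = 1 / lam)
    (hS : Measure.map S ℙ = expMeasure mu)
    (hindep : IndepFun X S ℙ) :
    1 / mu + 1 / lam ≤
      1 / mu + 𝔼[fun ω => X ω * (1 - exp (-mu * X ω))] /
        𝔼[fun ω => 1 - exp (-mu * X ω)] :=
  LCFS_GM1_peak_age_deterministic_minimizes_general X lam mu hmu hXnn hXint hEX
end
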